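/- For every integer n ≥ 3, in the presented group G_n = ⟨R₁, ..., R_{n-1} | braid relations, far commutation, R₁² = R₂ R₁² R₂⟩, the relation R_i² = R_{i+1} R_i² R_{i+1} holds for every i with 1 ≤ i ≤ n-2, and also the symmetric relation R_{i+1}² = R_i R_{i+1}² R_i holds for every such i. -/

import Mathlib

/-!
Both relations are transported by conjugation. In any braid group quotient, the half twist
`aba` swaps `a` and `b` whenever `aba = bab`, and the cyclic word `abc` sends `a ↦ b ↦ c`
whenever `a, b` and `b, c` satisfy the braid relation and `a, c` commute. Conjugating
`R₁² = R₂R₁²R₂` by `R₁R₂R₃, R₂R₃R₄, …` yields `Rᵢ² = Rᵢ₊₁Rᵢ²Rᵢ₊₁` for every `i`, and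
conjugating that by the half twist `RᵢRᵢ₊₁Rᵢ` yields `Rᵢ₊₁² = RᵢRᵢ₊₁²Rᵢ`.
-/

/-- The relators of the presentation
`⟨R₁, …, R_{n-1} | RᵢRᵢ₊₁Rᵢ = Rᵢ₊₁RᵢRᵢ₊₁ (1 ≤ i ≤ n-2); RᵢRⱼ = RⱼRᵢ (|i-j| ≥ 2);
R₁² = R₂R₁²R₂⟩`, as elements of the free group on `n - 1` generators
(indexed by `Fin (n-1)`, the generator `Rᵢ` being `FreeGroup.of ⟨i-1, _⟩`). -/
def spinOctRels (n : ℕ) : Set (FreeGroup (Fin (n - 1))) :=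
  { r | (∃ i j : Fin (n - 1), (j : ℕ) = (i : ℕ) + 1 ∧
          r = (FreeGroup.of i * FreeGroup.of j * FreeGroup.of i) *
              (FreeGroup.of j * FreeGroup.of i * FreeGroup.of j)⁻¹) ∨
        (∃ i j : Fin (n - 1), (i : ℕ) + 2 ≤ (j : ℕ) ∧
          r = (FreeGroup.of i * FreeGroup.of j) * (FreeGroup.of j * FreeGroup.of i)⁻¹) ∨
        (∃ i j : Fin (n - 1), (i : ℕ) = 0 ∧ (j : ℕ) = 1 ∧
          r = (FreeGroup.of i) ^ 2 *
              (FreeGroup.of j * (FreeGroup.of i) ^ 2 * FreeGroup.of j)⁻¹) }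

theorem SemiconjBy.right_unique {M : Type*} [Mul M] [IsRightCancelMul M] {a x y z : M}
    (hy : SemiconjBy a x y) (hz : SemiconjBy a x z) : y = z :=
  mul_right_cancel (hy.symm.trans hz)

section Semigroup

variable {S : Type*} [Semigroup S] {a b c : S}

theorem semiconjBy_halfTwist_left (h : a * b * a = b * a * b) : SemiconjBy (a * b * a) a b :=
  calc a * b * a * a = b * a * b * a := by rw [h]
    _ = b * (a * b * a) := by simp only [mul_assoc]

theorem semiconjBy_halfTwist_right (h : a * b * a = b * a * b) : SemiconjBy (a * b * a) b a :=
  calc a * b * a * b = a * (b * a * b) := by simp only [mul_assoc]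
    _ = a * (a * b * a) := by rw [h]

theorem semiconjBy_cycle_left (hab : a * b * a = b * a * b) (hac : a * c = c * a) :
    SemiconjBy (a * b * c) a b :=
  calc a * b * c * a = a * b * (c * a) := by simp only [mul_assoc]
    _ = a * b * a * c := by rw [← hac, ← mul_assoc]
    _ = b * (a * b * c) := by rw [hab]; simp only [mul_assoc]

theorem semiconjBy_cycle_right (hbc : b * c * b = c * b * c) (hac : a * c = c * a) :
    SemiconjBy (a * b * c) b c :=
  calc a * b * c * b = a * (b * c * b) := by simp only [mul_assoc]
    _ = a * c * (b * c) := by rw [hbc]; simp only [mul_assoc]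
    _ = c * (a * b * c) := by rw [hac]; simp only [mul_assoc]

end Semigroup

section CancelMonoid

variable {M : Type*} [Monoid M] [IsRightCancelMul M] {a b c : M}

theorem SemiconjBy.sq_eq_mul_sq_mul {v x y x' y' : M} (hx : SemiconjBy v x x')
    (hy : SemiconjBy v y y') (h : x ^ 2 = y * x ^ 2 * y) : x' ^ 2 = y' * x' ^ 2 * y' :=
  (hx.pow_right 2).right_unique <| h ▸ ((hy.mul_right (hx.pow_right 2)).mul_right hy)

theorem sq_eq_mul_sq_mul_swap (hab : a * b * a = b * a * b) (h : a ^ 2 = b * a ^ 2 * b) :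
    b ^ 2 = a * b ^ 2 * a :=
  (semiconjBy_halfTwist_left hab).sq_eq_mul_sq_mul (semiconjBy_halfTwist_right hab) h

theorem sq_eq_mul_sq_mul_shift (hab : a * b * a = b * a * b) (hbc : b * c * b = c * b * c)
    (hac : a * c = c * a) (h : a ^ 2 = b * a ^ 2 * b) : b ^ 2 = c * b ^ 2 * c :=
  (semiconjBy_cycle_left hab hac).sq_eq_mul_sq_mul (semiconjBy_cycle_right hbc hac) h

end CancelMonoid

section SpinOctRels

variable {n : ℕ}

theorem spinOctRels_of_braid {i j : Fin (n - 1)} (hij : (j : ℕ) = i + 1) :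
    PresentedGroup.of (rels := spinOctRels n) i * PresentedGroup.of j * PresentedGroup.of i =
      PresentedGroup.of j * PresentedGroup.of i * PresentedGroup.of j := by
  have h : PresentedGroup.mk (spinOctRels n) (.of i * .of j * .of i) =
      PresentedGroup.mk _ (.of j * .of i * .of j) :=
    PresentedGroup.mk_eq_mk_of_mul_inv_mem (Or.inl ⟨i, j, hij, rfl⟩)
  simpa only [map_mul, PresentedGroup.of] using h

theorem spinOctRels_of_comm {i j : Fin (n - 1)} (hij : (i : ℕ) + 2 ≤ j) :
    PresentedGroup.of (rels := spinOctRels n) i * PresentedGroup.of j =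
      PresentedGroup.of j * PresentedGroup.of i := by
  have h : PresentedGroup.mk (spinOctRels n) (.of i * .of j) =
      PresentedGroup.mk _ (.of j * .of i) :=
    PresentedGroup.mk_eq_mk_of_mul_inv_mem (Or.inr (Or.inl ⟨i, j, hij, rfl⟩))
  simpa only [map_mul, PresentedGroup.of] using h

theorem spinOctRels_of_sq_of_zero_one {i j : Fin (n - 1)} (hi : (i : ℕ) = 0) (hj : (j : ℕ) = 1) :
    PresentedGroup.of (rels := spinOctRels n) i ^ 2 =
      PresentedGroup.of j * PresentedGroup.of i ^ 2 * PresentedGroup.of j := by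
  have h : PresentedGroup.mk (spinOctRels n) (.of i ^ 2) =
      PresentedGroup.mk _ (.of j * .of i ^ 2 * .of j) :=
    PresentedGroup.mk_eq_mk_of_mul_inv_mem (Or.inr (Or.inr ⟨i, j, hi, hj, rfl⟩))
  simpa only [map_mul, map_pow, PresentedGroup.of] using h

theorem spinOctRels_of_sq {i j : Fin (n - 1)} (hij : (j : ℕ) = i + 1) :
    PresentedGroup.of (rels := spinOctRels n) i ^ 2 =
      PresentedGroup.of j * PresentedGroup.of i ^ 2 * PresentedGroup.of j := by
  obtain ⟨k, hk⟩ := i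
  induction k generalizing j with
  | zero => exact spinOctRels_of_sq_of_zero_one rfl hij
  | succ k ih =>
    have hprev : k < n - 1 := by omega
    have hfar : k + 2 ≤ (j : ℕ) := by dsimp only at hij; omega
    exact sq_eq_mul_sq_mul_shift (spinOctRels_of_braid (i := ⟨k, hprev⟩) rfl)
      (spinOctRels_of_braid hij) (spinOctRels_of_comm (i := ⟨k, hprev⟩) hfar) (ih hprev rfl)

end SpinOctRels

theorem stmt_12 (n : ℕ) (i j : Fin (n - 1)) (hij : (j : ℕ) = (i : ℕ) + 1) :
    (PresentedGroup.of (rels := spinOctRels n) i) ^ 2 =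
      PresentedGroup.of j * (PresentedGroup.of i) ^ 2 * PresentedGroup.of j ∧
    (PresentedGroup.of (rels := spinOctRels n) j) ^ 2 =
      PresentedGroup.of i * (PresentedGroup.of j) ^ 2 * PresentedGroup.of i :=
  ⟨spinOctRels_of_sq hij, sq_eq_mul_sq_mul_swap (spinOctRels_of_braid hij) (spinOctRels_of_sq hij)⟩
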